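/- arXiv:2208.14729 — 6 statements merged into one kernel-verified Lean document; each statement's English description precedes it below -/
import Mathlib

section
/- For every nondeterministic finite automaton with translucent letters (NFAwtl) A there exists a non-returning nondeterministic finite automaton with translucent letters (nrNFAwtl) B such that L(B) = L(A). Moreover, if A is deterministic (a DFAwtl), then B can be chosen to be deterministic (an nrDFAwtl). -/
/-- The end-of-tape behaviour of a non-returning automaton with translucent
letters: either a set of states to continue with (the empty set meaning that
the transition is undefined), or the operation `Accept`. -/
inductive EndMove (Q : Type) where
  | cont : Set Q → EndMove Q
  | accept : EndMove Q

/-- A nondeterministic finite automaton with translucent letters (NFAwtl).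
`τ q` is the set of letters that are translucent for state `q`. -/
structure NFAwtl (Q : Type) (A : Type) where
  τ : Q → Set A
  I : Set Q
  F : Set Q
  δ : Q → A → Set Q
  tr_compat : ∀ q a, a ∈ τ q → δ q a = ∅

namespace NFAwtl

variable {Q A : Type}

/-- A single computation step of an NFAwtl: the first letter (from the left)
that is not translucent for the current state is read and deleted. -/
inductive Step (M : NFAwtl Q A) : Q × List A → Q × List A → Prop
  | read (q q' : Q) (u v : List A) (a : A) :
      (∀ b ∈ u, b ∈ M.τ q) → a ∉ M.τ q → q' ∈ M.δ q a →
      Step M (q, u ++ a :: v) (q', u ++ v)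

/-- The language accepted by an NFAwtl: words from which some computation
reaches a configuration whose remaining tape contents is translucent for a
final state. -/
def lang (M : NFAwtl Q A) : Set (List A) :=
  { w | ∃ q₀ ∈ M.I, ∃ q w', Relation.ReflTransGen (Step M) (q₀, w) (q, w') ∧
        (∀ b ∈ w', b ∈ M.τ q) ∧ q ∈ M.F }

/-- An NFAwtl is deterministic (a DFAwtl) if it has a single initial state and
at most one transition for each state/letter pair. -/
def IsDet (M : NFAwtl Q A) : Prop :=
  (∃ q, M.I = {q}) ∧ ∀ q a, (M.δ q a).Subsingleton

end NFAwtl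

/-- A configuration of a non-returning automaton with translucent letters:
`conf x q w` means the tape contains `x ++ w` followed by the end-of-tape
marker, the current state is `q`, and the head is positioned at the first
letter of `w`; `accept` is the accepting halting configuration. -/
inductive NrConf (Q : Type) (A : Type) where
  | conf : List A → Q → List A → NrConf Q A
  | accept : NrConf Q A

/-- A non-returning nondeterministic finite automaton with translucent
letters (nrNFAwtl). -/
structure NrNFAwtl (Q : Type) (A : Type) where
  τ : Q → Set A
  I : Set Q
  δ : Q → A → Set Q
  δend : Q → EndMove Q
  tr_compat : ∀ q a, a ∈ τ q → δ q a = ∅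

namespace NrNFAwtl

variable {Q A : Type}

/-- A single computation step of an nrNFAwtl. -/
inductive Step (M : NrNFAwtl Q A) : NrConf Q A → NrConf Q A → Prop
  | read (x : List A) (q q' : Q) (u v : List A) (a : A) :
      (∀ b ∈ u, b ∈ M.τ q) → a ∉ M.τ q → q' ∈ M.δ q a →
      Step M (.conf x q (u ++ a :: v)) (.conf (x ++ u) q' v)
  | restart (x w : List A) (q q' : Q) (S : Set Q) :
      (∀ b ∈ w, b ∈ M.τ q) → M.δend q = .cont S → q' ∈ S →
      Step M (.conf x q w) (.conf [] q' (x ++ w))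
  | accept (x w : List A) (q : Q) :
      (∀ b ∈ w, b ∈ M.τ q) → M.δend q = .accept →
      Step M (.conf x q w) .accept

/-- The language accepted by an nrNFAwtl. -/
def lang (M : NrNFAwtl Q A) : Set (List A) :=
  { w | ∃ q₀ ∈ M.I, Relation.ReflTransGen (Step M) (.conf [] q₀ w) .accept }

/-- An nrNFAwtl is deterministic (an nrDFAwtl) if it has a single initial
state and, for every state and every letter (including the end-of-tape
marker), at most one transition is available. -/
def IsDet (M : NrNFAwtl Q A) : Prop :=
  (∃ q, M.I = {q}) ∧ (∀ q a, (M.δ q a).Subsingleton) ∧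
  (∀ q S, M.δend q = .cont S → S.Subsingleton)

end NrNFAwtl

/-- `L` is accepted by some NFAwtl. -/
def AcceptedByNFAwtl {A : Type} [Fintype A] (L : Set (List A)) : Prop :=
  ∃ (Q : Type) (_ : Fintype Q) (M : NFAwtl Q A), M.lang = L

/-- `L` is accepted by some DFAwtl. -/
def AcceptedByDFAwtl {A : Type} [Fintype A] (L : Set (List A)) : Prop :=
  ∃ (Q : Type) (_ : Fintype Q) (M : NFAwtl Q A), M.IsDet ∧ M.lang = L

/-- `L` is accepted by some nrNFAwtl. -/
def AcceptedByNrNFAwtl {A : Type} [Fintype A] (L : Set (List A)) : Prop :=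
  ∃ (Q : Type) (_ : Fintype Q) (M : NrNFAwtl Q A), M.lang = L

/-- `L` is accepted by some nrDFAwtl. -/
def AcceptedByNrDFAwtl {A : Type} [Fintype A] (L : Set (List A)) : Prop :=
  ∃ (Q : Type) (_ : Fintype Q) (M : NrNFAwtl Q A), M.IsDet ∧ M.lang = L

/-! Simulate `M` by an nrNFAwtl on `Q × Bool`. In state `(q, true)` the head stands at the
start of the tape and reads the first non-translucent letter exactly as `q` would; it then
enters `(q', false)`, for which every letter is translucent, so it runs to the end marker and
restarts in `(q', true)` on the tape with that letter deleted. Thus each step of `M` becomes a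
read followed by a restart, and acceptance of `M` in a final state becomes the end-of-tape
operation `Accept` of the `true` copy. Determinism is preserved since every state of `M`
contributes at most one transition per symbol. -/

namespace NFAwtl

variable {Q A : Type} (M : NFAwtl Q A)

def AcceptsFrom (q : Q) (w : List A) : Prop :=
  ∃ q' w', Relation.ReflTransGen M.Step (q, w) (q', w') ∧ (∀ b ∈ w', b ∈ M.τ q') ∧ q' ∈ M.F

variable {M} in
lemma AcceptsFrom.of_step {q q' : Q} {w w' : List A} (hstep : M.Step (q, w) (q', w'))
    (h : M.AcceptsFrom q' w') : M.AcceptsFrom q w :=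
  let ⟨r, v, hrun, hv, hr⟩ := h
  ⟨r, v, .head hstep hrun, hv, hr⟩

open Classical in
noncomputable def toNr : NrNFAwtl (Q × Bool) A where
  τ
    | (q, true) => M.τ q
    | (_, false) => Set.univ
  I := (·, true) '' M.I
  δ
    | (q, true), a => (·, false) '' M.δ q a
    | (_, false), _ => ∅
  δend
    | (q, true) => if q ∈ M.F then .accept else .cont ∅
    | (q, false) => .cont {(q, true)}
  tr_compat := by
    rintro ⟨q, _ | _⟩ a h
    · rfl
    · simp [M.tr_compat q a h]

lemma toNr_reaches_of_step {c c' : Q × List A} (h : M.Step c c') :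
    Relation.ReflTransGen M.toNr.Step (.conf [] (c.1, true) c.2) (.conf [] (c'.1, true) c'.2) := by
  obtain ⟨q, q', u, v, a, hu, ha, hq'⟩ := h
  have hread : M.toNr.Step (.conf [] (q, true) (u ++ a :: v)) (.conf u (q', false) v) :=
    .read [] (q, true) (q', false) u v a hu ha ⟨q', hq', rfl⟩
  have hrestart : M.toNr.Step (.conf u (q', false) v) (.conf [] (q', true) (u ++ v)) :=
    .restart u v (q', false) (q', true) {(q', true)} (fun _ _ => trivial) rfl rfl
  exact .head hread (.single hrestart)

lemma toNr_reaches_of_reaches {c c' : Q × List A} (h : Relation.ReflTransGen M.Step c c') :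
    Relation.ReflTransGen M.toNr.Step (.conf [] (c.1, true) c.2) (.conf [] (c'.1, true) c'.2) :=
  Relation.ReflTransGen.lift' (fun c : Q × List A => NrConf.conf [] (c.1, true) c.2)
    (fun _ _ => M.toNr_reaches_of_step) _ _ h

/-- What a configuration of `M.toNr` that leads to `Accept` tells about `M`. A `true` state
away from the start of the tape is never reached from an initial configuration, so it carries
no information. -/
def SimAccepts : NrConf (Q × Bool) A → Prop
  | .conf x (q, true) w => x = [] → M.AcceptsFrom q w
  | .conf x (q, false) w => M.AcceptsFrom q (x ++ w)
  | .accept => True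

lemma simAccepts_of_step {c c' : NrConf (Q × Bool) A} (h : M.toNr.Step c c')
    (h' : M.SimAccepts c') : M.SimAccepts c := by
  cases h with
  | read _ p p' u v a hu ha hp' =>
    obtain ⟨q, _ | _⟩ := p
    · exact hp'.elim
    · obtain ⟨q', hq', rfl⟩ := hp'
      rintro rfl
      exact AcceptsFrom.of_step (.read q q' u v a hu ha hq') h'
  | restart _ _ p p' S _ hS hp' =>
    obtain ⟨q, _ | _⟩ := p
    · obtain rfl : S = {(q, true)} := (EndMove.cont.inj hS).symm
      obtain rfl := hp'
      exact h' rfl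
    · by_cases hq : q ∈ M.F <;> simp [toNr, hq] at hS
      exact (hS ▸ hp').elim
  | accept _ w p hw hacc =>
    obtain ⟨q, _ | _⟩ := p
    · simp [toNr] at hacc
    · have hq : q ∈ M.F := by
        by_contra hq
        simp [toNr, hq] at hacc
      exact fun _ => ⟨q, w, .refl, hw, hq⟩

lemma simAccepts_of_reaches_accept {c : NrConf (Q × Bool) A}
    (h : Relation.ReflTransGen M.toNr.Step c .accept) : M.SimAccepts c := by
  induction h using Relation.ReflTransGen.head_induction_on with
  | refl => trivial
  | head hstep _ ih => exact M.simAccepts_of_step hstep ih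

theorem toNr_lang : M.toNr.lang = M.lang := by
  ext w
  constructor
  · rintro ⟨_, ⟨q₀, hq₀, rfl⟩, hrun⟩
    exact ⟨q₀, hq₀, M.simAccepts_of_reaches_accept hrun rfl⟩
  · rintro ⟨q₀, hq₀, q, w', hrun, hw', hq⟩
    refine ⟨(q₀, true), ⟨q₀, hq₀, rfl⟩, (M.toNr_reaches_of_reaches hrun).tail ?_⟩
    exact .accept [] w' (q, true) hw' (by simp [toNr, hq])

variable {M} in
theorem IsDet.toNr (h : M.IsDet) : M.toNr.IsDet := by
  obtain ⟨⟨q₀, hI⟩, hδ⟩ := h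
  refine ⟨⟨(q₀, true), by simp [NFAwtl.toNr, hI]⟩, ?_, ?_⟩
  · rintro ⟨q, _ | _⟩ a
    · exact Set.subsingleton_empty
    · exact (hδ q a).image _
  · rintro ⟨q, _ | _⟩ S hS
    · obtain rfl : S = {(q, true)} := (EndMove.cont.inj hS).symm
      exact Set.subsingleton_singleton
    · by_cases hq : q ∈ M.F <;> simp [NFAwtl.toNr, hq] at hS
      exact hS ▸ Set.subsingleton_empty

end NFAwtl

theorem nfawtl_to_nrnfawtl_general {A : Type} {Q : Type} [Fintype Q]
    (M : NFAwtl Q A) :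
    ∃ (Q' : Type) (_ : Fintype Q') (B : NrNFAwtl Q' A),
      B.lang = M.lang ∧ (M.IsDet → B.IsDet) :=
  ⟨Q × Bool, inferInstance, M.toNr, M.toNr_lang, NFAwtl.IsDet.toNr⟩

/-- For every NFAwtl `M` there exists an nrNFAwtl `B` with
`L(B) = L(M)`; moreover, if `M` is deterministic, then `B` can be chosen to be
deterministic. -/
theorem nfawtl_to_nrnfawtl {A : Type} [Fintype A] {Q : Type} [Fintype Q]
    (M : NFAwtl Q A) :
    ∃ (Q' : Type) (_ : Fintype Q') (B : NrNFAwtl Q' A),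
      B.lang = M.lang ∧ (M.IsDet → B.IsDet) :=
  nfawtl_to_nrnfawtl_general M
end

section
/- Every nrNFAwtl A can be effectively converted into an nrNFAwtl C such that L(C) = L(A), every computation of C starting from an initial configuration is finite (C never gets into an infinite computation), and C accepts only in configurations whose tape contents has been read and deleted completely (i.e., C executes an Accept step only when the remaining tape contents is empty). Moreover, if A is an nrDFAwtl, then C can be chosen to be an nrDFAwtl. -/
/-!
The normalized automaton runs `M` while remembering the set `R` of states it has restarted into
since it last read a letter, and refuses to restart into a state of `R`. Between two such restarts
the tape is unchanged, so a refused restart would only repeat a configuration; a shortest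
accepting computation of `M` never does this, hence no accepting computation is lost. Every read
shrinks the tape and every restart without a read grows `R`, so all computations terminate.
Instead of accepting, the normalized automaton restarts into a sweeping state for which no
letter is translucent, which deletes the whole tape and only then accepts.
-/

namespace NrNFAwtl

variable {Q A : Type}

inductive AcceptsIn (M : NrNFAwtl Q A) : ℕ → NrConf Q A → Prop
  | accept : AcceptsIn M 0 .accept
  | step {n : ℕ} {c c' : NrConf Q A} : M.Step c c' → AcceptsIn M n c' → AcceptsIn M (n + 1) c

theorem reflTransGen_accept_iff_exists_acceptsIn (M : NrNFAwtl Q A) (c : NrConf Q A) :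
    Relation.ReflTransGen M.Step c .accept ↔ ∃ n, M.AcceptsIn n c := by
  constructor
  · intro h
    induction h using Relation.ReflTransGen.head_induction_on with
    | refl => exact ⟨0, .accept⟩
    | head hstep _ ih =>
      obtain ⟨n, hn⟩ := ih
      exact ⟨n + 1, .step hstep hn⟩
  · rintro ⟨n, h⟩
    induction h with
    | accept => exact .refl
    | step hstep _ ih => exact .head hstep ih

theorem exists_isLeast_acceptsIn (M : NrNFAwtl Q A) {c : NrConf Q A}
    (h : Relation.ReflTransGen M.Step c .accept) : ∃ n, IsLeast {m | M.AcceptsIn m c} n := by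
  classical
  exact ⟨_, Nat.isLeast_find ((reflTransGen_accept_iff_exists_acceptsIn M c).mp h)⟩

theorem isLeast_acceptsIn_of_step {M : NrNFAwtl Q A} {n : ℕ} {c c' : NrConf Q A}
    (hc : IsLeast {m | M.AcceptsIn m c} (n + 1)) (hstep : M.Step c c')
    (hc' : M.AcceptsIn n c') : IsLeast {m | M.AcceptsIn m c'} n :=
  ⟨hc', fun _ hm => Nat.le_of_succ_le_succ (hc.2 (AcceptsIn.step hstep hm))⟩

section Normalize

variable [DecidableEq Q] (M : NrNFAwtl Q A)

def restartTargets (q : Q) (R : Finset Q) : Set (Option (Q × Finset Q)) :=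
  match M.δend q with
  | .accept => {none}
  | .cont S => (fun q' => some (q', insert q' R)) '' (S \ R)

/-- The state `some (q, R)` simulates `q`; `none` is the sweeping state. -/
def normalize : NrNFAwtl (Option (Q × Finset Q)) A where
  τ
    | some (q, _) => M.τ q
    | none => ∅
  I := (fun q => some (q, ∅)) '' M.I
  δ
    | some (q, _), a => (fun q' => some (q', ∅)) '' M.δ q a
    | none, _ => {none}
  δend
    | some (q, R) => .cont (restartTargets M q R)
    | none => .accept
  tr_compat := by
    rintro (_ | ⟨q, R⟩) a ha
    · exact absurd ha (Set.notMem_empty a)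
    · simp [M.tr_compat q a ha]

theorem normalize_reaches_accept_of_sweeping (z : List A) :
    Relation.ReflTransGen M.normalize.Step (.conf [] none z) .accept := by
  induction z with
  | nil => exact .single (.accept [] [] none (by simp) rfl)
  | cons a z ih =>
    refine .head ?_ ih
    simpa using Step.read (M := M.normalize) [] none none [] z a (by simp) (by simp [normalize])
      (by simp [normalize])

theorem normalize_reaches_accept_of_isLeast {n : ℕ} {x w : List A} {q : Q} {R : Finset Q}
    (hleast : IsLeast {m | M.AcceptsIn m (.conf x q w)} n)
    (hR : ∀ s ∈ R, n ∈ lowerBounds {m | M.AcceptsIn m (.conf [] s (x ++ w))}) :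
    Relation.ReflTransGen M.normalize.Step (.conf x (some (q, R)) w) .accept := by
  induction n generalizing x q w R with
  | zero => cases hleast.1
  | succ n ih =>
    obtain ⟨c', hstep, htail⟩ : ∃ c', M.Step (.conf x q w) c' ∧ M.AcceptsIn n c' := by
      cases hleast.1 with | step hstep htail => exact ⟨_, hstep, htail⟩
    have htail_least := isLeast_acceptsIn_of_step hleast hstep htail
    cases hstep with
    | read _ _ q' u v a hu ha hq' =>
      refine .head (.read (M := M.normalize) x (some (q, R)) (some (q', ∅)) u v a hu ha
        ⟨q', hq', rfl⟩) ?_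
      exact ih htail_least (by simp)
    | restart _ _ _ q' S hw he hq' =>
      have hq'R : q' ∉ R := fun hq'R => by simpa using hR q' hq'R htail
      refine .head (.restart x w (some (q, R)) (some (q', insert q' R)) _ hw rfl ?_) ?_
      · simp only [restartTargets, he]
        exact ⟨q', ⟨hq', hq'R⟩, rfl⟩
      · refine ih htail_least ?_
        intro s hs m hm
        rcases Finset.mem_insert.mp hs with rfl | hsR
        · exact htail_least.2 hm
        · exact Nat.le_of_succ_le (hR s hsR hm)
    | accept _ _ _ hw he =>
      refine .head (.restart x w (some (q, R)) none _ hw rfl ?_)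
        (normalize_reaches_accept_of_sweeping M (x ++ w))
      simp [restartTargets, he]

theorem reaches_accept_of_normalize_reaches_accept {c : NrConf (Option (Q × Finset Q)) A}
    (h : Relation.ReflTransGen M.normalize.Step c .accept) :
    ∀ (x : List A) (q : Q) (R : Finset Q) (w : List A), c = .conf x (some (q, R)) w →
      Relation.ReflTransGen M.Step (.conf x q w) .accept := by
  induction h using Relation.ReflTransGen.head_induction_on with
  | refl => intro _ _ _ _ h; cases h
  | head hstep _ ih =>
    rintro x q R w rfl
    cases hstep with
    | read _ _ s' u v a hu ha hs' =>
      obtain ⟨q', hq', rfl⟩ := hs'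
      exact .head (.read x q q' u v a hu ha hq') (ih _ q' ∅ v rfl)
    | restart _ _ _ s' S hw he hs' =>
      cases he
      cases hM : M.δend q with
      | accept => exact .single (.accept x w q hw hM)
      | cont S =>
        simp only [restartTargets, hM] at hs'
        obtain ⟨q', ⟨hq', -⟩, rfl⟩ := hs'
        exact .head (.restart x w q q' S hw hM hq') (ih [] q' _ (x ++ w) rfl)
    | accept _ _ _ _ he => cases he

theorem lang_normalize : M.normalize.lang = M.lang := by
  ext w
  constructor
  · rintro ⟨_, ⟨q₀, hq₀, rfl⟩, hreach⟩
    exact ⟨q₀, hq₀, reaches_accept_of_normalize_reaches_accept M hreach [] q₀ ∅ w rfl⟩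
  · rintro ⟨q₀, hq₀, hreach⟩
    obtain ⟨n, hn⟩ := exists_isLeast_acceptsIn M hreach
    exact ⟨_, ⟨q₀, hq₀, rfl⟩, normalize_reaches_accept_of_isLeast M hn (by simp)⟩

variable {M}

theorem normalize_left_eq_nil_of_step {c c' : NrConf (Option (Q × Finset Q)) A}
    (h : M.normalize.Step c c') (hc : ∀ x v, c = .conf x none v → x = []) :
    ∀ x v, c' = .conf x none v → x = [] := by
  rintro x v hc'
  cases h with
  | read x₀ s _ u _ a hu _ hs' =>
    cases hc'
    rcases s with _ | ⟨q, R⟩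
    · simp [hc x₀ _ rfl, List.eq_nil_iff_forall_not_mem.mpr hu]
    · obtain ⟨_, -, h⟩ := hs'
      cases h
  | restart => cases hc'; rfl
  | accept => cases hc'

theorem normalize_left_eq_nil_of_reflTransGen {c c' : NrConf (Option (Q × Finset Q)) A}
    (h : Relation.ReflTransGen M.normalize.Step c c') (hc : ∀ x v, c = .conf x none v → x = []) :
    ∀ x v, c' = .conf x none v → x = [] := by
  induction h with
  | refl => exact hc
  | tail _ hstep ih => exact normalize_left_eq_nil_of_step hstep ih

theorem normalize_accepts_only_on_empty_tape {q₀ : Option (Q × Finset Q)}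
    (hq₀ : q₀ ∈ M.normalize.I) {w x v : List A} {q : Option (Q × Finset Q)}
    (hreach : Relation.ReflTransGen M.normalize.Step (.conf [] q₀ w) (.conf x q v))
    (hacc : M.normalize.Step (.conf x q v) .accept) : x = [] ∧ v = [] := by
  cases hacc with
  | accept _ _ _ hv he =>
    rcases q with _ | ⟨q, R⟩
    · obtain ⟨q₀, -, rfl⟩ := hq₀
      exact ⟨normalize_left_eq_nil_of_reflTransGen hreach (by simp) x v rfl,
        List.eq_nil_iff_forall_not_mem.mpr hv⟩
    · cases he

theorem IsDet.normalize (h : M.IsDet) : M.normalize.IsDet := by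
  obtain ⟨⟨q₀, hI⟩, hδ, hend⟩ := h
  refine ⟨⟨some (q₀, ∅), by simp [NrNFAwtl.normalize, hI]⟩, ?_, ?_⟩
  · rintro (_ | ⟨q, R⟩) a
    · exact Set.subsingleton_singleton
    · exact (hδ q a).image _
  · rintro (_ | ⟨q, R⟩) S hS
    · cases hS
    · cases hS
      cases hM : M.δend q with
      | accept => simp [restartTargets, hM]
      | cont S => simpa [restartTargets, hM] using ((hend q S hM).anti Set.sdiff_subset).image _

end Normalize

section Termination

variable [Fintype Q]

/-- Restarting without reading enlarges `R`, which has at most `card Q` elements. -/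
def normalizeStateRank : Option (Q × Finset Q) → ℕ
  | some (_, R) => Fintype.card Q + 1 - R.card
  | none => 0

/-- Reading a letter costs one unit of tape length, which outweighs any state rank. -/
def normalizeRank : NrConf (Option (Q × Finset Q)) A → ℕ
  | .conf x s w => (x ++ w).length * (Fintype.card Q + 2) + normalizeStateRank s + 1
  | .accept => 0

theorem normalizeStateRank_le (s : Option (Q × Finset Q)) :
    normalizeStateRank s ≤ Fintype.card Q + 1 := by
  cases s <;> simp [normalizeStateRank]

variable [DecidableEq Q] {M : NrNFAwtl Q A}

theorem normalizeStateRank_lt_of_mem_restartTargets {q : Q} {R : Finset Q}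
    {s : Option (Q × Finset Q)} (hs : s ∈ restartTargets M q R) :
    normalizeStateRank s < normalizeStateRank (some (q, R)) := by
  have hR : R.card ≤ Fintype.card Q := R.card_le_univ
  cases hM : M.δend q with
  | accept =>
    simp only [restartTargets, hM, Set.mem_singleton_iff] at hs
    subst hs
    simp only [normalizeStateRank]
    omega
  | cont S =>
    simp only [restartTargets, hM] at hs
    obtain ⟨q', ⟨-, hq'R⟩, rfl⟩ := hs
    simp only [normalizeStateRank, Finset.card_insert_of_notMem hq'R]
    omega

theorem normalizeRank_lt_of_step {c c' : NrConf (Option (Q × Finset Q)) A}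
    (h : M.normalize.Step c c') : normalizeRank c' < normalizeRank c := by
  cases h with
  | read _ _ s' =>
    have := normalizeStateRank_le s'
    simp only [normalizeRank, List.length_append, List.length_cons]
    nlinarith
  | restart _ _ s _ _ _ he hs' =>
    rcases s with _ | ⟨q, R⟩
    · cases he
    · cases he
      have := normalizeStateRank_lt_of_mem_restartTargets hs'
      simp only [normalizeRank, List.nil_append]
      omega
  | accept => simp [normalizeRank]

theorem not_exists_infinite_normalize_run :
    ¬ ∃ f : ℕ → NrConf (Option (Q × Finset Q)) A, ∀ n, M.normalize.Step (f n) (f (n + 1)) :=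
  fun ⟨f, hf⟩ => not_strictAnti_of_wellFoundedLT (normalizeRank ∘ f)
    (strictAnti_nat_of_succ_lt fun n => normalizeRank_lt_of_step (hf n))

end Termination

end NrNFAwtl

theorem nrnfawtl_normalization_general {A : Type} {Q : Type} [Fintype Q]
    (M : NrNFAwtl Q A) :
    ∃ (Q' : Type) (_ : Fintype Q') (C : NrNFAwtl Q' A),
      C.lang = M.lang ∧
      (¬ ∃ f : ℕ → NrConf Q' A,
          (∃ q₀ ∈ C.I, ∃ w : List A, f 0 = NrConf.conf [] q₀ w) ∧
          ∀ n : ℕ, C.Step (f n) (f (n + 1))) ∧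
      (∀ q₀ ∈ C.I, ∀ (w x v : List A) (q : Q'),
          Relation.ReflTransGen C.Step (NrConf.conf [] q₀ w) (NrConf.conf x q v) →
          C.Step (NrConf.conf x q v) NrConf.accept → x = [] ∧ v = []) ∧
      (M.IsDet → C.IsDet) := by
  classical
  exact ⟨_, inferInstance, M.normalize, M.lang_normalize,
    fun ⟨f, _, hf⟩ => NrNFAwtl.not_exists_infinite_normalize_run ⟨f, hf⟩,
    fun _ hq₀ _ _ _ _ hreach hacc => NrNFAwtl.normalize_accepts_only_on_empty_tape hq₀ hreach hacc,
    NrNFAwtl.IsDet.normalize⟩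

/-- Every nrNFAwtl `M` can be converted into an equivalent
nrNFAwtl `C` that never gets into an infinite computation (starting from an
initial configuration) and that executes an `Accept` step only when its tape
contents has been read and deleted completely; if `M` is deterministic, then
`C` can be chosen deterministic. -/
theorem nrnfawtl_normalization {A : Type} [Fintype A] {Q : Type} [Fintype Q]
    (M : NrNFAwtl Q A) :
    ∃ (Q' : Type) (_ : Fintype Q') (C : NrNFAwtl Q' A),
      C.lang = M.lang ∧
      (¬ ∃ f : ℕ → NrConf Q' A,
          (∃ q₀ ∈ C.I, ∃ w : List A, f 0 = NrConf.conf [] q₀ w) ∧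
          ∀ n : ℕ, C.Step (f n) (f (n + 1))) ∧
      (∀ q₀ ∈ C.I, ∀ (w x v : List A) (q : Q'),
          Relation.ReflTransGen C.Step (NrConf.conf [] q₀ w) (NrConf.conf x q v) →
          C.Step (NrConf.conf x q v) NrConf.accept → x = [] ∧ v = []) ∧
      (M.IsDet → C.IsDet) :=
  nrnfawtl_normalization_general M
end

section
/- A language L ⊆ {a}* over a one-letter alphabet is accepted by some nrNFAwtl if and only if L is a regular language. -/
open Relation

namespace NFA

variable {α σ : Type*} (N : NFA α σ)

theorem mem_accepts_iff_exists_start {x : List α} :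
    x ∈ N.accepts ↔ ∃ s ∈ N.start, x ∈ N.acceptsFrom {s} := by
  simp only [mem_accepts, mem_acceptsFrom, N.mem_evalFrom_iff_exists (S := N.start)]
  tauto

theorem nil_mem_acceptsFrom_singleton {s : σ} : [] ∈ N.acceptsFrom {s} ↔ s ∈ N.accept := by
  simp

theorem cons_mem_acceptsFrom_singleton {s : σ} {a : α} {x : List α} :
    a :: x ∈ N.acceptsFrom {s} ↔ ∃ t ∈ N.step s a, x ∈ N.acceptsFrom {t} := by
  rw [cons_mem_acceptsFrom, stepSet_singleton, mem_acceptsFrom]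
  simp only [N.mem_evalFrom_iff_exists (S := N.step s a), mem_acceptsFrom]
  tauto

theorem mem_acceptsFrom_singleton_iff {P : σ → List α → Prop}
    (hnil : ∀ s, P s [] ↔ s ∈ N.accept)
    (hcons : ∀ s a x, P s (a :: x) ↔ ∃ t ∈ N.step s a, P t x) {s : σ} {x : List α} :
    x ∈ N.acceptsFrom {s} ↔ P s x := by
  induction x generalizing s with
  | nil => rw [nil_mem_acceptsFrom_singleton, hnil]
  | cons a x ih => simp only [cons_mem_acceptsFrom_singleton, hcons, ih]

theorem isRegular_accepts [Finite σ] : N.accepts.IsRegular :=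
  Language.isRegular_iff.2 ⟨Set σ, Fintype.ofFinite _, N.toDFA, N.toDFA_correct⟩

end NFA

namespace NrNFAwtl

variable {Q A : Type} (M : NrNFAwtl Q A)

def AcceptsFrom (q : Q) (w : List A) : Prop :=
  ReflTransGen M.Step (.conf [] q w) .accept

def RestartsOn (w : List A) (q q' : Q) : Prop :=
  (∀ b ∈ w, b ∈ M.τ q) ∧ ∃ S, M.δend q = .cont S ∧ q' ∈ S

/-- One move from `q·w·◁` (a read, `Accept`, or a restart), after which `P` holds of the
resulting configuration. -/
def AcceptsVia (P : Q → List A → Prop) (q : Q) (w : List A) : Prop :=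
  (∃ a v q', w = a :: v ∧ q' ∈ M.δ q a ∧ P q' v) ∨
    ((∀ b ∈ w, b ∈ M.τ q) ∧ M.δend q = .accept) ∨
    ∃ q', M.RestartsOn w q q' ∧ P q' w

theorem restartsOn_cons_le (a : A) (v : List A) : M.RestartsOn (a :: v) ≤ M.RestartsOn [a] :=
  fun _ _ ⟨hw, h⟩ => ⟨fun b hb => hw b (List.mem_singleton.1 hb ▸ List.mem_cons_self), h⟩

variable {M}

/-- If `τ q` is `∅` or `univ`, a read from `q` consumes the first letter, so no letter is ever
left of the head. -/
theorem step_conf_nil_iff {q : Q} (hq : M.τ q = ∅ ∨ M.τ q = Set.univ) {w : List A}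
    {c : NrConf Q A} :
    M.Step (.conf [] q w) c ↔
      (∃ a v q', w = a :: v ∧ q' ∈ M.δ q a ∧ c = .conf [] q' v) ∨
        ((∀ b ∈ w, b ∈ M.τ q) ∧ M.δend q = .accept ∧ c = .accept) ∨
        ∃ q', M.RestartsOn w q q' ∧ c = .conf [] q' w := by
  constructor
  · rintro (⟨_, _, q', u, v, a, hu, ha, hq'⟩ | ⟨_, _, _, q', S, hw, hS, hq'⟩ |
      ⟨_, _, _, hw, hacc⟩)
    · have hu : u = [] := by
        rcases hq with h | h
        · exact List.eq_nil_iff_forall_not_mem.2 fun b hb => by simpa [h] using hu b hb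
        · simp [h] at ha
      subst hu
      exact Or.inl ⟨a, v, q', rfl, hq', rfl⟩
    · exact Or.inr (Or.inr ⟨q', ⟨hw, S, hS, hq'⟩, rfl⟩)
    · exact Or.inr (Or.inl ⟨hw, hacc, rfl⟩)
  · rintro (⟨a, v, q', rfl, hq', rfl⟩ | ⟨hw, hacc, rfl⟩ |
      ⟨q', ⟨hw, S, hS, hq'⟩, rfl⟩)
    · exact .read [] q q' [] v a (by simp) (fun ha => by simp [M.tr_compat q a ha] at hq') hq'
    · exact .accept [] w q hw hacc
    · exact .restart [] w q q' S hw hS hq'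

theorem acceptsFrom_iff {q : Q} (hq : M.τ q = ∅ ∨ M.τ q = Set.univ) {w : List A} :
    M.AcceptsFrom q w ↔ M.AcceptsVia M.AcceptsFrom q w := by
  rw [AcceptsFrom, ReflTransGen.cases_head_iff]
  simp only [reduceCtorEq, false_or, step_conf_nil_iff hq]
  constructor
  · rintro ⟨c, ⟨a, v, q', rfl, hq', rfl⟩ | ⟨hw, hacc, rfl⟩ | ⟨q', hq', rfl⟩, hc⟩
    exacts [Or.inl ⟨a, v, q', rfl, hq', hc⟩, Or.inr (Or.inl ⟨hw, hacc⟩),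
      Or.inr (Or.inr ⟨q', hq', hc⟩)]
  · rintro (⟨a, v, q', rfl, hq', hc⟩ | ⟨hw, hacc⟩ | ⟨q', hq', hc⟩)
    exacts [⟨_, Or.inl ⟨a, v, q', rfl, hq', rfl⟩, hc⟩,
      ⟨_, Or.inr (Or.inl ⟨hw, hacc, rfl⟩), .refl⟩,
      ⟨_, Or.inr (Or.inr ⟨q', hq', rfl⟩), hc⟩]

/-- `AcceptsFrom` is the least fixed point of `AcceptsVia`. -/
theorem AcceptsFrom.induction_on {P : Q → List A → Prop}
    (hτ : ∀ q, M.τ q = ∅ ∨ M.τ q = Set.univ) {q : Q} {w : List A} (h : M.AcceptsFrom q w)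
    (hP : ∀ q w, M.AcceptsVia P q w → P q w) : P q w := by
  unfold AcceptsFrom at h
  generalize hc : (NrConf.conf [] q w : NrConf Q A) = c at h
  induction h using ReflTransGen.head_induction_on generalizing q w with
  | refl => cases hc
  | head hstep _ ih =>
    subst hc
    apply hP
    rcases (step_conf_nil_iff (hτ q)).1 hstep with
      ⟨a, v, q', rfl, hq', rfl⟩ | ⟨hw, hacc, rfl⟩ | ⟨q', hq', rfl⟩
    exacts [Or.inl ⟨a, v, q', rfl, hq', ih rfl⟩, Or.inr (Or.inl ⟨hw, hacc⟩),
      Or.inr (Or.inr ⟨q', hq', ih rfl⟩)]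

theorem AcceptsFrom.of_reflTransGen_restartsOn {q p : Q} {w : List A}
    (h : ReflTransGen (M.RestartsOn w) q p) (hp : M.AcceptsFrom p w) : M.AcceptsFrom q w := by
  induction h using ReflTransGen.head_induction_on with
  | refl => exact hp
  | head hqq' _ ih =>
    obtain ⟨hw, S, hS, hq'⟩ := hqq'
    exact .head (.restart [] w _ _ S hw hS hq') ih

open Classical in
noncomputable def ofNFA {σ : Type} (N : NFA A σ) : NrNFAwtl σ A where
  τ _ := ∅
  I := N.start
  δ := N.step
  δend q := if q ∈ N.accept then .accept else .cont ∅
  tr_compat := by simp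

theorem not_restartsOn_ofNFA {σ : Type} (N : NFA A σ) (w : List A) (q q' : σ) :
    ¬ (ofNFA N).RestartsOn w q q' := by
  rintro ⟨-, S, hS, hq'⟩
  simp only [ofNFA] at hS
  split_ifs at hS
  cases hS
  exact hq'

theorem acceptsFrom_ofNFA_nil_iff {σ : Type} (N : NFA A σ) {q : σ} :
    (ofNFA N).AcceptsFrom q [] ↔ q ∈ N.accept := by
  rw [acceptsFrom_iff (Or.inl rfl)]
  simp only [AcceptsVia, not_restartsOn_ofNFA, false_and, exists_false, or_false]
  by_cases hq : q ∈ N.accept <;> simp [ofNFA, hq]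

theorem acceptsFrom_ofNFA_cons_iff {σ : Type} (N : NFA A σ) {q : σ} {a : A} {v : List A} :
    (ofNFA N).AcceptsFrom q (a :: v) ↔ ∃ t ∈ N.step q a, (ofNFA N).AcceptsFrom t v := by
  have hτ : ¬ ∀ b ∈ a :: v, b ∈ (ofNFA N).τ q := fun h => h a List.mem_cons_self
  rw [acceptsFrom_iff (Or.inl rfl)]
  simp only [AcceptsVia, not_restartsOn_ofNFA, hτ, List.cons.injEq, false_and,
    exists_false, or_false]
  exact ⟨fun ⟨_, _, t, ⟨rfl, rfl⟩, ht, h⟩ => ⟨t, ht, h⟩,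
    fun ⟨t, ht, h⟩ => ⟨a, v, t, ⟨rfl, rfl⟩, ht, h⟩⟩

theorem ofNFA_lang {σ : Type} (N : NFA A σ) : (ofNFA N).lang = N.accepts := by
  refine Set.ext fun w => Iff.trans ?_ N.mem_accepts_iff_exists_start.symm
  exact exists_congr fun q => and_congr_right fun _ => (N.mem_acceptsFrom_singleton_iff
    (fun _ => acceptsFrom_ofNFA_nil_iff N) (fun _ _ _ => acceptsFrom_ofNFA_cons_iff N)).symm

section Unary

variable (M : NrNFAwtl Q Unit)

theorem tau_eq_empty_or_univ (q : Q) : M.τ q = ∅ ∨ M.τ q = Set.univ := by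
  by_cases h : () ∈ M.τ q
  · exact Or.inr (Set.eq_univ_of_forall fun _ => h)
  · exact Or.inl (Set.eq_empty_of_forall_notMem fun _ => h)

theorem restartsOn_singleton_le (a : Unit) (w : List Unit) :
    M.RestartsOn [a] ≤ M.RestartsOn w :=
  fun _ _ ⟨ha, h⟩ => ⟨fun _ _ => ha a (List.mem_singleton_self a), h⟩

/-- `none` is an accepting sink, entered by an `Accept` on a nonempty translucent tape; a state
`some q` reads a letter after a chain of restarts on a translucent tape, and accepts the empty
tape after a chain of restarts at the end of the tape. -/
def toNFA : NFA Unit (Option Q) where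
  step
    | none, _ => {none}
    | some q, a => {t | ∃ p, ReflTransGen (M.RestartsOn [a]) q p ∧
        (t = none ∧ a ∈ M.τ p ∧ M.δend p = .accept ∨ ∃ q' ∈ M.δ p a, t = some q')}
  start := some '' M.I
  accept := {t | t.elim True fun q => ∃ p, ReflTransGen (M.RestartsOn []) q p ∧
    M.δend p = .accept}

theorem none_mem_toNFA_acceptsFrom (w : List Unit) : w ∈ M.toNFA.acceptsFrom {none} := by
  induction w with
  | nil => exact (M.toNFA.nil_mem_acceptsFrom_singleton).2 trivial
  | cons a w ih => exact (M.toNFA.cons_mem_acceptsFrom_singleton).2 ⟨none, rfl, ih⟩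

variable {M}

theorem toNFA_step_mono {q q' : Q} {a : Unit} (h : M.RestartsOn [a] q q') :
    M.toNFA.step (some q') a ⊆ M.toNFA.step (some q) a :=
  fun _ ⟨p, hp, ht⟩ => ⟨p, .head h hp, ht⟩

theorem AcceptsFrom.mem_toNFA_acceptsFrom {q : Q} {w : List Unit} (h : M.AcceptsFrom q w) :
    w ∈ M.toNFA.acceptsFrom {some q} := by
  refine h.induction_on (P := fun q w => w ∈ M.toNFA.acceptsFrom {some q})
    M.tau_eq_empty_or_univ fun q w hq => ?_
  rcases hq with ⟨a, v, q', rfl, hq', hv⟩ | ⟨hw, hacc⟩ | ⟨q', hqq', hw⟩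
  · exact (M.toNFA.cons_mem_acceptsFrom_singleton).2
      ⟨_, ⟨q, .refl, Or.inr ⟨q', hq', rfl⟩⟩, hv⟩
  · cases w with
    | nil => exact (M.toNFA.nil_mem_acceptsFrom_singleton).2 ⟨q, .refl, hacc⟩
    | cons a v =>
      exact (M.toNFA.cons_mem_acceptsFrom_singleton).2
        ⟨none, ⟨q, .refl, Or.inl ⟨rfl, hw a List.mem_cons_self, hacc⟩⟩,
          M.none_mem_toNFA_acceptsFrom v⟩
  · cases w with
    | nil =>
      obtain ⟨p, hp, hacc⟩ := (M.toNFA.nil_mem_acceptsFrom_singleton).1 hw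
      exact (M.toNFA.nil_mem_acceptsFrom_singleton).2 ⟨p, .head hqq' hp, hacc⟩
    | cons a v =>
      obtain ⟨t, ht, hv⟩ := (M.toNFA.cons_mem_acceptsFrom_singleton).1 hw
      exact (M.toNFA.cons_mem_acceptsFrom_singleton).2
        ⟨t, toNFA_step_mono (M.restartsOn_cons_le a v q q' hqq') ht, hv⟩

theorem acceptsFrom_of_mem_toNFA_acceptsFrom {q : Q} {w : List Unit}
    (h : w ∈ M.toNFA.acceptsFrom {some q}) : M.AcceptsFrom q w := by
  induction w generalizing q with
  | nil =>
    obtain ⟨p, hp, hacc⟩ := (M.toNFA.nil_mem_acceptsFrom_singleton).1 h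
    refine .of_reflTransGen_restartsOn hp ((acceptsFrom_iff (M.tau_eq_empty_or_univ p)).2 ?_)
    exact Or.inr (Or.inl ⟨by simp, hacc⟩)
  | cons a v ih =>
    obtain ⟨t, ⟨p, hp, ht⟩, hv⟩ := (M.toNFA.cons_mem_acceptsFrom_singleton).1 h
    refine .of_reflTransGen_restartsOn (ReflTransGen.mono (M.restartsOn_singleton_le a _) _ _ hp)
      ((acceptsFrom_iff (M.tau_eq_empty_or_univ p)).2 ?_)
    rcases ht with ⟨rfl, ha, hacc⟩ | ⟨q', hq', rfl⟩
    · exact Or.inr (Or.inl ⟨fun b _ => ha, hacc⟩)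
    · exact Or.inl ⟨a, v, q', rfl, hq', ih hv⟩

variable (M) in
theorem toNFA_accepts : M.toNFA.accepts = M.lang := by
  ext w
  rw [M.toNFA.mem_accepts_iff_exists_start]
  constructor
  · rintro ⟨_, ⟨q, hq, rfl⟩, hw⟩
    exact ⟨q, hq, acceptsFrom_of_mem_toNFA_acceptsFrom hw⟩
  · rintro ⟨q, hq, hw⟩
    exact ⟨some q, ⟨q, hq, rfl⟩, AcceptsFrom.mem_toNFA_acceptsFrom hw⟩

end Unary

end NrNFAwtl

/-- A language over a one-letter alphabet is accepted by some
nrNFAwtl if and only if it is regular. -/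
theorem unary_nrnfawtl_iff_regular (L : Language Unit) :
    AcceptedByNrNFAwtl (L : Set (List Unit)) ↔ L.IsRegular := by
  constructor
  · rintro ⟨Q, _, M, hM⟩
    rw [← M.toNFA_accepts] at hM
    exact hM ▸ M.toNFA.isRegular_accepts
  · rintro ⟨σ, _, d, rfl⟩
    exact ⟨σ, inferInstance, NrNFAwtl.ofNFA d.toNFA,
      by rw [NrNFAwtl.ofNFA_lang, d.toNFA_correct]⟩
end

section
/- If L₁ and L₂ are languages over a common alphabet Σ that are both accepted by nrNFAwtls, then L₁ ∪ L₂ is accepted by an nrNFAwtl; i.e., the class of languages accepted by nrNFAwtls is closed under union. -/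
/-! Run the two automata side by side on disjoint copies of their state sets and start in
either copy. No transition ever leaves a copy, so a computation of the combined automaton
from an initial state of one copy is, letter for letter, a computation of that automaton. -/

namespace EndMove

variable {Q Q' : Type}

def map (f : Q → Q') : EndMove Q → EndMove Q'
  | .cont S => .cont (f '' S)
  | .accept => .accept

end EndMove

namespace NrConf

variable {Q Q' A : Type}

def map (f : Q → Q') : NrConf Q A → NrConf Q' A
  | .conf x q w => .conf x (f q) w
  | .accept => .accept

end NrConf

namespace NrNFAwtl

variable {Q Q' A : Type}

/-- On the image of `f`, `N` behaves exactly as `M`; in particular no computation of `N`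
leaves that image. -/
structure IsComponent (M : NrNFAwtl Q A) (N : NrNFAwtl Q' A) (f : Q → Q') : Prop where
  τ_eq : ∀ q, N.τ (f q) = M.τ q
  δ_eq : ∀ q a, N.δ (f q) a = f '' M.δ q a
  δend_eq : ∀ q, N.δend (f q) = (M.δend q).map f

section IsComponent

variable {M : NrNFAwtl Q A} {N : NrNFAwtl Q' A} {f : Q → Q'}

theorem IsComponent.step_map (hf : IsComponent M N f) {c c' : NrConf Q A}
    (h : Step M c c') : Step N (c.map f) (c'.map f) := by
  cases h with
  | read x q q' u v a hu ha hq =>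
    refine .read x (f q) (f q') u v a ?_ ?_ ?_
    · rwa [hf.τ_eq]
    · rwa [hf.τ_eq]
    · rw [hf.δ_eq]
      exact Set.mem_image_of_mem f hq
  | restart x w q q' S hw hS hq =>
    refine .restart x w (f q) (f q') (f '' S) ?_ ?_ (Set.mem_image_of_mem f hq)
    · rwa [hf.τ_eq]
    · rw [hf.δend_eq, hS, EndMove.map]
  | accept x w q hw hS =>
    refine .accept x w (f q) ?_ ?_
    · rwa [hf.τ_eq]
    · rw [hf.δend_eq, hS, EndMove.map]

theorem IsComponent.exists_step_of_step_map (hf : IsComponent M N f) {c : NrConf Q A}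
    {d : NrConf Q' A} (h : Step N (c.map f) d) : ∃ c', d = c'.map f ∧ Step M c c' := by
  obtain ⟨x, q, w⟩ | _ := c
  · generalize hp : f q = p at h
    cases h with
    | read x p p' u v a hu ha hp' =>
      subst hp
      rw [hf.τ_eq] at hu ha
      rw [hf.δ_eq] at hp'
      obtain ⟨q', hq', rfl⟩ := hp'
      exact ⟨.conf (x ++ u) q' v, rfl, .read x q q' u v a hu ha hq'⟩
    | restart x w p p' S hw hS hp' =>
      subst hp
      rw [hf.τ_eq] at hw
      rw [hf.δend_eq] at hS
      cases hM : M.δend q with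
      | cont S₀ =>
        rw [hM, EndMove.map, EndMove.cont.injEq] at hS
        subst hS
        obtain ⟨q', hq', rfl⟩ := hp'
        exact ⟨.conf [] q' (x ++ w), rfl, .restart x w q q' S₀ hw hM hq'⟩
      | accept => rw [hM, EndMove.map] at hS; cases hS
    | accept x w p hw hS =>
      subst hp
      rw [hf.τ_eq] at hw
      rw [hf.δend_eq] at hS
      cases hM : M.δend q with
      | cont S₀ => rw [hM, EndMove.map] at hS; cases hS
      | accept => exact ⟨.accept, rfl, .accept x w q hw hM⟩
  · cases h

theorem IsComponent.reflTransGen_accept_iff (hf : IsComponent M N f) {c : NrConf Q A} :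
    Relation.ReflTransGen (Step N) (c.map f) .accept ↔
      Relation.ReflTransGen (Step M) c .accept := by
  refine ⟨fun h => ?_, fun h => h.lift (NrConf.map f) fun _ _ => hf.step_map⟩
  generalize hd : c.map f = d at h
  induction h using Relation.ReflTransGen.head_induction_on generalizing c with
  | refl =>
    obtain ⟨x, q, w⟩ | _ := c
    · cases hd
    · exact .refl
  | head hstep _ ih =>
    subst hd
    obtain ⟨c', rfl, hs⟩ := hf.exists_step_of_step_map hstep
    exact .head hs (ih rfl)

end IsComponent

section Sum

variable {Q₁ Q₂ A : Type}

def sum (M₁ : NrNFAwtl Q₁ A) (M₂ : NrNFAwtl Q₂ A) : NrNFAwtl (Q₁ ⊕ Q₂) A where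
  τ := Sum.elim M₁.τ M₂.τ
  I := Sum.inl '' M₁.I ∪ Sum.inr '' M₂.I
  δ := Sum.elim (fun q a => Sum.inl '' M₁.δ q a) (fun q a => Sum.inr '' M₂.δ q a)
  δend := Sum.elim (fun q => (M₁.δend q).map Sum.inl) (fun q => (M₂.δend q).map Sum.inr)
  tr_compat := by
    rintro (q | q) a ha
    · simp [M₁.tr_compat q a ha]
    · simp [M₂.tr_compat q a ha]

variable (M₁ : NrNFAwtl Q₁ A) (M₂ : NrNFAwtl Q₂ A)

theorem isComponent_sum_inl : IsComponent M₁ (M₁.sum M₂) Sum.inl :=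
  ⟨fun _ => rfl, fun _ _ => rfl, fun _ => rfl⟩

theorem isComponent_sum_inr : IsComponent M₂ (M₁.sum M₂) Sum.inr :=
  ⟨fun _ => rfl, fun _ _ => rfl, fun _ => rfl⟩

theorem lang_sum : (M₁.sum M₂).lang = M₁.lang ∪ M₂.lang := by
  ext w
  have h₁ (q : Q₁) := (isComponent_sum_inl M₁ M₂).reflTransGen_accept_iff (c := .conf [] q w)
  have h₂ (q : Q₂) := (isComponent_sum_inr M₁ M₂).reflTransGen_accept_iff (c := .conf [] q w)
  constructor
  · rintro ⟨_, ⟨q, hq, rfl⟩ | ⟨q, hq, rfl⟩, h⟩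
    · exact .inl ⟨q, hq, (h₁ q).1 h⟩
    · exact .inr ⟨q, hq, (h₂ q).1 h⟩
  · rintro (⟨q, hq, h⟩ | ⟨q, hq, h⟩)
    · exact ⟨.inl q, .inl ⟨q, hq, rfl⟩, (h₁ q).2 h⟩
    · exact ⟨.inr q, .inr ⟨q, hq, rfl⟩, (h₂ q).2 h⟩

end Sum

end NrNFAwtl

/-- The class of languages accepted by nrNFAwtls is closed
under union. -/
theorem nrNFAwtl_closed_under_union {A : Type} [Fintype A]
    (L₁ L₂ : Set (List A))
    (h₁ : AcceptedByNrNFAwtl L₁) (h₂ : AcceptedByNrNFAwtl L₂) :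
    AcceptedByNrNFAwtl (L₁ ∪ L₂) := by
  obtain ⟨Q₁, _, M₁, rfl⟩ := h₁
  obtain ⟨Q₂, _, M₂, rfl⟩ := h₂
  exact ⟨Q₁ ⊕ Q₂, inferInstance, M₁.sum M₂, M₁.lang_sum M₂⟩
end

section
/- If L ⊆ Σ* is accepted by an nrDFAwtl, then the complement Σ* \ L is accepted by an nrDFAwtl; i.e., the class of languages accepted by nrDFAwtls is closed under complementation. -/
namespace List

variable {α : Type*} {P : α → Prop}

theorem exists_eq_append_cons_of_not_forall {w : List α} (h : ¬ ∀ b ∈ w, P b) :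
    ∃ u a v, w = u ++ a :: v ∧ (∀ b ∈ u, P b) ∧ ¬ P a := by
  induction w with
  | nil => simp at h
  | cons b w ih =>
    by_cases hb : P b
    · obtain ⟨u, a, v, rfl, hu, ha⟩ := ih (by simpa [hb] using h)
      exact ⟨b :: u, a, v, rfl, by simpa [hb] using hu, ha⟩
    · exact ⟨[], b, w, rfl, by simp, hb⟩

theorem append_cons_inj_of_forall {u₁ u₂ v₁ v₂ : List α} {a₁ a₂ : α}
    (hu₁ : ∀ b ∈ u₁, P b) (ha₁ : ¬ P a₁) (hu₂ : ∀ b ∈ u₂, P b) (ha₂ : ¬ P a₂)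
    (h : u₁ ++ a₁ :: v₁ = u₂ ++ a₂ :: v₂) : u₁ = u₂ ∧ a₁ = a₂ ∧ v₁ = v₂ := by
  rcases append_eq_append_iff.1 h with ⟨_ | ⟨c, s⟩, rfl, hs⟩ | ⟨_ | ⟨c, s⟩, rfl, hs⟩
  · simpa using hs
  · obtain ⟨rfl, -⟩ := cons.inj hs
    exact absurd (hu₂ a₁ (by simp)) ha₁
  · simpa [eq_comm] using hs
  · obtain ⟨rfl, -⟩ := cons.inj hs
    exact absurd (hu₁ a₂ (by simp)) ha₂

end List

namespace Relation

variable {α : Type*} {r : α → α → Prop} {a c t : α}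

theorem ReflTransGen.of_rightUnique_of_terminal (U : Relator.RightUnique r)
    (ht : ∀ d, ¬ r t d) (hac : ReflTransGen r a c) (hat : ReflTransGen r a t) :
    ReflTransGen r c t := by
  rcases ReflTransGen.total_of_right_unique U hac hat with hct | htc
  · exact hct
  · rcases htc.cases_head with rfl | ⟨d, htd, -⟩
    exacts [.refl, (ht d htd).elim]

theorem ReflTransGen.eq_of_rightUnique_of_terminal (U : Relator.RightUnique r)
    (ht : ∀ d, ¬ r t d) (hc : ∀ d, ¬ r c d) (hac : ReflTransGen r a c)
    (hat : ReflTransGen r a t) : c = t := by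
  rcases (hac.of_rightUnique_of_terminal U ht hat).cases_head with h | ⟨d, hcd, -⟩
  exacts [h, (hc d hcd).elim]

theorem ReflTransGen.not_transGen_self_of_rightUnique_of_terminal (U : Relator.RightUnique r)
    (ht : ∀ d, ¬ r t d) (hac : ReflTransGen r a c) (hat : ReflTransGen r a t) :
    ¬ TransGen r c c := by
  have hct := hac.of_rightUnique_of_terminal U ht hat
  clear hac hat
  induction hct using ReflTransGen.head_induction_on with
  | refl =>
    intro htt
    obtain ⟨d, htd, -⟩ := TransGen.head'_iff.1 htt
    exact ht d htd
  | head hcd _ ih =>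
    intro hcc
    obtain ⟨e, hce, hec⟩ := TransGen.head'_iff.1 hcc
    cases U hcd hce
    exact ih (TransGen.tail' hec hcd)

end Relation

namespace NrNFAwtl

open Relation

variable {Q A : Type} {M : NrNFAwtl Q A}

theorem not_step_accept (d : NrConf Q A) : ¬ M.Step .accept d := nofun

theorem step_read_iff {x u v : List A} {q : Q} {a : A} (hu : ∀ b ∈ u, b ∈ M.τ q)
    (ha : a ∉ M.τ q) {d : NrConf Q A} :
    M.Step (.conf x q (u ++ a :: v)) d ↔ ∃ q' ∈ M.δ q a, d = .conf (x ++ u) q' v := by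
  refine ⟨fun h => ?_, fun ⟨q', hq', hd⟩ => hd ▸ .read x q q' u v a hu ha hq'⟩
  generalize hw : u ++ a :: v = w at h
  rcases h with ⟨_, _, q', u', v', a', hu', ha', hq'⟩ | ⟨_, _, _, _, _, hw'⟩ | ⟨_, _, _, hw'⟩
  · obtain ⟨rfl, rfl, rfl⟩ := List.append_cons_inj_of_forall hu ha hu' ha' hw
    exact ⟨q', hq', rfl⟩
  all_goals exact absurd (hw' a (by simp [← hw])) ha

theorem step_end_cont_iff {x w : List A} {q : Q} {S : Set Q} (hw : ∀ b ∈ w, b ∈ M.τ q)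
    (hS : M.δend q = .cont S) {d : NrConf Q A} :
    M.Step (.conf x q w) d ↔ ∃ q' ∈ S, d = .conf [] q' (x ++ w) := by
  refine ⟨fun h => ?_, fun ⟨q', hq', hd⟩ => hd ▸ .restart x w q q' S hw hS hq'⟩
  rcases h with ⟨_, _, _, u, v, a, -, ha⟩ | ⟨_, _, _, q', S', -, hS', hq'⟩ | ⟨_, _, _, -, hacc⟩
  · exact absurd (hw a (by simp)) ha
  · cases hS.symm.trans hS'
    exact ⟨q', hq', rfl⟩
  · cases hS.symm.trans hacc

theorem step_end_accept_iff {x w : List A} {q : Q} (hw : ∀ b ∈ w, b ∈ M.τ q)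
    (hacc : M.δend q = .accept) {d : NrConf Q A} :
    M.Step (.conf x q w) d ↔ d = .accept := by
  refine ⟨fun h => ?_, fun hd => hd ▸ .accept x w q hw hacc⟩
  rcases h with ⟨_, _, _, u, v, a, -, ha⟩ | ⟨_, _, _, q', S', -, hS', hq'⟩ | ⟨_, _, _, -, hacc⟩
  · exact absurd (hw a (by simp)) ha
  · cases hacc.symm.trans hS'
  · rfl

theorem IsDet.step_rightUnique (hM : M.IsDet) : Relator.RightUnique M.Step := by
  rintro (⟨x, q, w⟩ | _) d₁ d₂ h₁ h₂
  · by_cases hw : ∀ b ∈ w, b ∈ M.τ q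
    · rcases hE : M.δend q with S | _
      · obtain ⟨q₁, hq₁, rfl⟩ := (step_end_cont_iff hw hE).1 h₁
        obtain ⟨q₂, hq₂, rfl⟩ := (step_end_cont_iff hw hE).1 h₂
        rw [hM.2.2 q S hE hq₁ hq₂]
      · rw [(step_end_accept_iff hw hE).1 h₁, (step_end_accept_iff hw hE).1 h₂]
    · obtain ⟨u, a, v, rfl, hu, ha⟩ := List.exists_eq_append_cons_of_not_forall hw
      obtain ⟨q₁, hq₁, rfl⟩ := (step_read_iff hu ha).1 h₁
      obtain ⟨q₂, hq₂, rfl⟩ := (step_read_iff hu ha).1 h₂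
      rw [hM.2.1 q a hq₁ hq₂]
  · exact absurd h₁ (not_step_accept d₁)

theorem IsDet.not_reaches_accept_of_stuck (hM : M.IsDet) {c₀ c : NrConf Q A}
    (hc : ReflTransGen M.Step c₀ c) (hne : c ≠ .accept) (hstuck : ∀ d, ¬ M.Step c d) :
    ¬ ReflTransGen M.Step c₀ .accept := fun hacc =>
  hne (hc.eq_of_rightUnique_of_terminal hM.step_rightUnique not_step_accept hstuck hacc)

theorem IsDet.not_reaches_accept_of_cycle (hM : M.IsDet) {c₀ c : NrConf Q A}
    (hc : ReflTransGen M.Step c₀ c) (hcycle : TransGen M.Step c c) :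
    ¬ ReflTransGen M.Step c₀ .accept := fun hacc =>
  hc.not_transGen_self_of_rightUnique_of_terminal hM.step_rightUnique not_step_accept hacc hcycle

/-- `none` is an accepting sink, entered when `M` is stuck on a letter. In state `some (q, S)`
the automaton simulates `M` in state `q`, and `S` collects the states from which `M` has restarted
since its last read. -/
noncomputable def complement (M : NrNFAwtl Q A) : NrNFAwtl (Option (Q × Finset Q)) A :=
  open Classical in
  { τ
      | none => Set.univ
      | some (q, _) => M.τ q
    I := (fun q => some (q, ∅)) '' M.I
    δ
      | none, _ => ∅
      | some (q, _), a =>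
        if a ∈ M.τ q then ∅
        else if M.δ q a = ∅ then {none}
        else (fun q' => some (q', ∅)) '' M.δ q a
    δend
      | none => .accept
      | some (q, S) =>
        match M.δend q with
        | .accept => .cont ∅
        | .cont T =>
          if T = ∅ ∨ q ∈ S then .accept else .cont ((fun q' => some (q', insert q S)) '' T)
    tr_compat := by
      rintro (_ | ⟨q, S⟩) a ha
      · rfl
      · exact if_pos ha }

theorem IsDet.complement (hM : M.IsDet) : M.complement.IsDet := by
  obtain ⟨⟨q₀, hI⟩, hδ, hδend⟩ := hM
  refine ⟨⟨some (q₀, ∅), by simp [NrNFAwtl.complement, hI]⟩, ?_, ?_⟩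
  · rintro (_ | ⟨q, S⟩) a
    · exact Set.subsingleton_empty
    · dsimp only [NrNFAwtl.complement]
      split_ifs
      exacts [Set.subsingleton_empty, Set.subsingleton_singleton, (hδ q a).image _]
  · rintro (_ | ⟨q, S⟩) T' hT'
    · cases hT'
    · rcases hE : M.δend q with T | _ <;> simp only [NrNFAwtl.complement, hE] at hT'
      · split_ifs at hT'
        cases hT'
        exact (hδend q T hE).image _
      · cases hT'
        exact Set.subsingleton_empty

open Classical in
theorem complement_reaches_accept_of_not_reaches_accept [Fintype Q] {x w : List A} {q : Q}
    (S : Finset Q) (hrej : ¬ ReflTransGen M.Step (.conf x q w) .accept) :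
    ReflTransGen M.complement.Step (.conf x (some (q, S)) w) .accept := by
  by_cases hw : ∀ b ∈ w, b ∈ M.τ q
  · rcases hE : M.δend q with T | _
    · by_cases hstop : T = ∅ ∨ q ∈ S
      · exact .single (.accept x w _ hw (by simp [complement, hE, hstop]))
      obtain ⟨hT, hqS⟩ := not_or.1 hstop
      obtain ⟨q', hq'⟩ := Set.nonempty_iff_ne_empty.2 hT
      have hstep : M.Step (.conf x q w) (.conf [] q' (x ++ w)) := .restart x w q q' T hw hE hq'
      refine .head (.restart x w _ (some (q', insert q S)) ((fun p => some (p, insert q S)) '' T)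
        hw (by simp [complement, hE, hstop]) ⟨q', hq', rfl⟩) ?_
      exact complement_reaches_accept_of_not_reaches_accept _ fun h => hrej (.head hstep h)
    · exact absurd (.single (.accept x w q hw hE)) hrej
  · obtain ⟨u, a, v, rfl, hu, ha⟩ := List.exists_eq_append_cons_of_not_forall hw
    by_cases hδ : M.δ q a = ∅
    · refine .head (.read x (some (q, S)) none u v a hu ha (by simp [complement, ha, hδ])) ?_
      exact .single (.accept _ v none (fun _ _ => trivial) rfl)
    obtain ⟨q', hq'⟩ := Set.nonempty_iff_ne_empty.2 hδ
    have hstep : M.Step (.conf x q (u ++ a :: v)) (.conf (x ++ u) q' v) :=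
      .read x q q' u v a hu ha hq'
    refine .head (.read x (some (q, S)) (some (q', ∅)) u v a hu ha
      (by simp [complement, ha, hδ, hq'])) ?_
    exact complement_reaches_accept_of_not_reaches_accept ∅ fun h => hrej (.head hstep h)
termination_by ((x ++ w).length, Fintype.card Q - S.card)
decreasing_by
  · have hcard := Finset.card_le_univ (insert q S)
    rw [Finset.card_insert_of_notMem hqS] at hcard ⊢
    rw [List.nil_append]
    exact Prod.Lex.right _ (by omega)
  · subst w
    exact Prod.Lex.left _ _ (by simp)

/-- Invariant of the runs of `M.complement` from the image of `c₀`: in state `some (q, S)` the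
simulated configuration of `M` is reachable from `c₀`, and every `p ∈ S` restarted `M` on the
current tape into a configuration from which `M` has since reached the current one. -/
def ComplementInv (M : NrNFAwtl Q A) (c₀ : NrConf Q A) :
    NrConf (Option (Q × Finset Q)) A → Prop
  | .conf x (some (q, S)) w =>
      ReflTransGen M.Step c₀ (.conf x q w) ∧
      ∀ p ∈ S, ∃ T, M.δend p = .cont T ∧
        ∃ p' ∈ T, ReflTransGen M.Step (.conf [] p' (x ++ w)) (.conf x q w)
  | _ => ¬ ReflTransGen M.Step c₀ .accept

namespace ComplementInv

variable {c₀ : NrConf Q A} {x w : List A} {q : Q} {S : Finset Q}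

theorem read (hM : M.IsDet) {u v : List A} {a : A} {s' : Option (Q × Finset Q)}
    (hc : M.ComplementInv c₀ (.conf x (some (q, S)) (u ++ a :: v)))
    (hu : ∀ b ∈ u, b ∈ M.τ q) (ha : a ∉ M.τ q) (hs' : s' ∈ M.complement.δ (some (q, S)) a) :
    M.ComplementInv c₀ (.conf (x ++ u) s' v) := by
  obtain ⟨hreach, -⟩ := hc
  by_cases hδ : M.δ q a = ∅
  · obtain rfl : s' = none := by simpa [NrNFAwtl.complement, ha, hδ] using hs'
    refine hM.not_reaches_accept_of_stuck hreach nofun fun d hd => ?_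
    obtain ⟨q', hq', -⟩ := (step_read_iff hu ha).1 hd
    simp [hδ] at hq'
  · obtain ⟨q', hq', rfl⟩ : ∃ q' ∈ M.δ q a, some (q', ∅) = s' := by
      simpa [NrNFAwtl.complement, ha, hδ] using hs'
    exact ⟨hreach.tail (.read x q q' u v a hu ha hq'), by simp⟩

open Classical in
theorem restart {T' : Set (Option (Q × Finset Q))} {s' : Option (Q × Finset Q)}
    (hc : M.ComplementInv c₀ (.conf x (some (q, S)) w)) (hw : ∀ b ∈ w, b ∈ M.τ q)
    (hE : M.complement.δend (some (q, S)) = .cont T') (hs' : s' ∈ T') :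
    M.ComplementInv c₀ (.conf [] s' (x ++ w)) := by
  obtain ⟨hreach, hS⟩ := hc
  rcases hE₀ : M.δend q with T | _ <;> simp only [NrNFAwtl.complement, hE₀] at hE
  · split_ifs at hE
    cases hE
    obtain ⟨q', hq', rfl⟩ := hs'
    have hstep : M.Step (.conf x q w) (.conf [] q' (x ++ w)) := .restart x w q q' T hw hE₀ hq'
    refine ⟨hreach.tail hstep, fun p hp => ?_⟩
    rcases Finset.mem_insert.1 hp with rfl | hp
    · exact ⟨T, hE₀, q', hq', .refl⟩
    · obtain ⟨Tp, hTp, p', hp', hback⟩ := hS p hp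
      exact ⟨Tp, hTp, p', hp', hback.tail hstep⟩
  · cases hE
    exact absurd hs' id

theorem not_reaches_accept (hM : M.IsDet) (hc : M.ComplementInv c₀ (.conf x (some (q, S)) w))
    (hw : ∀ b ∈ w, b ∈ M.τ q) (hE : M.complement.δend (some (q, S)) = .accept) :
    ¬ ReflTransGen M.Step c₀ .accept := by
  obtain ⟨hreach, hS⟩ := hc
  rcases hE₀ : M.δend q with T | _ <;> simp only [NrNFAwtl.complement, hE₀] at hE
  · split_ifs at hE with hstop
    rcases hstop with rfl | hqS
    · refine hM.not_reaches_accept_of_stuck hreach nofun fun d hd => ?_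
      simpa using (step_end_cont_iff hw hE₀).1 hd
    · obtain ⟨T', hT', p', hp', hback⟩ := hS q hqS
      cases hE₀.symm.trans hT'
      exact hM.not_reaches_accept_of_cycle hreach
        (TransGen.head' (.restart x w q p' T hw hE₀ hp') hback)
  · cases hE

theorem step (hM : M.IsDet) {c d : NrConf (Option (Q × Finset Q)) A}
    (hc : M.ComplementInv c₀ c) (h : M.complement.Step c d) : M.ComplementInv c₀ d := by
  rcases h with ⟨x, _ | ⟨q, S⟩, s', u, v, a, hu, ha, hs'⟩ |
    ⟨x, w, _ | ⟨q, S⟩, s', T', hw, hE, hs'⟩ | ⟨x, w, _ | ⟨q, S⟩, hw, hE⟩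
  · exact absurd trivial ha
  · exact hc.read hM hu ha hs'
  · cases hE
  · exact hc.restart hw hE hs'
  · exact hc
  · exact hc.not_reaches_accept hM hw hE

theorem reflTransGen (hM : M.IsDet) {c d : NrConf (Option (Q × Finset Q)) A}
    (hc : M.ComplementInv c₀ c) (h : ReflTransGen M.complement.Step c d) :
    M.ComplementInv c₀ d := by
  induction h with
  | refl => exact hc
  | tail _ hstep ih => exact ih.step hM hstep

end ComplementInv

theorem IsDet.lang_complement [Fintype Q] (hM : M.IsDet) : M.complement.lang = M.langᶜ := by
  obtain ⟨q₀, hI⟩ := hM.1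
  have hIc : M.complement.I = {some (q₀, ∅)} := by simp [NrNFAwtl.complement, hI]
  ext w
  simp only [lang, hI, hIc, Set.mem_singleton_iff, exists_eq_left, Set.mem_ofPred_eq,
    Set.mem_compl_iff]
  exact ⟨(ComplementInv.reflTransGen hM (c := .conf [] (some (q₀, ∅)) w) ⟨.refl, by simp⟩ ·),
    complement_reaches_accept_of_not_reaches_accept ∅⟩

end NrNFAwtl

/-- The class of languages accepted by nrDFAwtls is closed
under complementation. -/
theorem nrDFAwtl_closed_under_complement {A : Type} [Fintype A]
    (L : Set (List A)) (h : AcceptedByNrDFAwtl L) :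
    AcceptedByNrDFAwtl Lᶜ := by
  obtain ⟨Q, _, M, hM, rfl⟩ := h
  exact ⟨_, inferInstance, M.complement, hM.complement, hM.lang_complement⟩
end

section
/- If L₁ ⊆ Σ₁* and L₂ ⊆ Σ₂* are languages over disjoint alphabets Σ₁ and Σ₂ that are both accepted by nrDFAwtls, then the shuffle sh(L₁, L₂) ⊆ (Σ₁ ∪ Σ₂)* is accepted by an nrDFAwtl; i.e., the class of languages accepted by nrDFAwtls is closed under disjoint shuffle. -/
/-- `IsShuffle u v w` says that `w` is an interleaving (shuffle) of `u` and `v`. -/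
inductive IsShuffle {A : Type} : List A → List A → List A → Prop
  | nil : IsShuffle [] [] []
  | left (a : A) (u v w : List A) : IsShuffle u v w → IsShuffle (a :: u) v (a :: w)
  | right (a : A) (u v w : List A) : IsShuffle u v w → IsShuffle u (a :: v) (a :: w)

section ShuffleAux

variable {A₁ A₂ : Type}

/-- Projection of a word over `A₁ ⊕ A₂` to the left alphabet. -/
def projL : List (A₁ ⊕ A₂) → List A₁ :=
  List.filterMap (Sum.elim some fun _ => none)

/-- Projection of a word over `A₁ ⊕ A₂` to the right alphabet. -/
def projR : List (A₁ ⊕ A₂) → List A₂ :=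
  List.filterMap (Sum.elim (fun _ => none) some)

@[simp] lemma projL_nil : projL ([] : List (A₁ ⊕ A₂)) = [] := rfl
@[simp] lemma projR_nil : projR ([] : List (A₁ ⊕ A₂)) = [] := rfl
@[simp] lemma projL_cons_inl (a : A₁) (w : List (A₁ ⊕ A₂)) :
    projL (Sum.inl a :: w) = a :: projL w := rfl
@[simp] lemma projL_cons_inr (b : A₂) (w : List (A₁ ⊕ A₂)) :
    projL (Sum.inr b :: w) = projL w := rfl
@[simp] lemma projR_cons_inl (a : A₁) (w : List (A₁ ⊕ A₂)) :
    projR (Sum.inl a :: w) = projR w := rfl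
@[simp] lemma projR_cons_inr (b : A₂) (w : List (A₁ ⊕ A₂)) :
    projR (Sum.inr b :: w) = b :: projR w := rfl
@[simp] lemma projL_append (u v : List (A₁ ⊕ A₂)) :
    projL (u ++ v) = projL u ++ projL v := by simp [projL]
@[simp] lemma projR_append (u v : List (A₁ ⊕ A₂)) :
    projR (u ++ v) = projR u ++ projR v := by simp [projR]

lemma mem_projL {a : A₁} {w : List (A₁ ⊕ A₂)} : a ∈ projL w ↔ Sum.inl a ∈ w := by
  simp only [projL, List.mem_filterMap]
  constructor
  · rintro ⟨s, hs, h⟩; cases s <;> simp_all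
  · intro h; exact ⟨_, h, rfl⟩

lemma mem_projR {b : A₂} {w : List (A₁ ⊕ A₂)} : b ∈ projR w ↔ Sum.inr b ∈ w := by
  simp only [projR, List.mem_filterMap]
  constructor
  · rintro ⟨s, hs, h⟩; cases s <;> simp_all
  · intro h; exact ⟨_, h, rfl⟩

lemma isShuffle_proj (z : List (A₁ ⊕ A₂)) :
    IsShuffle ((projL z).map Sum.inl) ((projR z).map Sum.inr) z := by
  induction z with
  | nil => exact .nil
  | cons s t ih =>
    cases s with
    | inl a =>
      simp only [projL_cons_inl, projR_cons_inl, List.map_cons]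
      exact .left _ _ _ _ ih
    | inr b =>
      simp only [projL_cons_inr, projR_cons_inr, List.map_cons]
      exact .right _ _ _ _ ih

lemma proj_of_isShuffle : ∀ {u' v' z : List (A₁ ⊕ A₂)}, IsShuffle u' v' z →
    ∀ (u : List A₁) (v : List A₂), u' = u.map Sum.inl → v' = v.map Sum.inr →
    projL z = u ∧ projR z = v := by
  intro u' v' z h
  induction h with
  | nil =>
    intro u v hu hv
    cases u with
    | cons _ _ => simp at hu
    | nil =>
      cases v with
      | cons _ _ => simp at hv
      | nil => exact ⟨rfl, rfl⟩
  | left a u' v' w _ ih =>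
    intro u v hu hv
    cases u with
    | nil => simp at hu
    | cons a₁ u₀ =>
      simp only [List.map_cons, List.cons.injEq] at hu
      obtain ⟨rfl, hu⟩ := hu
      obtain ⟨h1, h2⟩ := ih u₀ v hu hv
      simp [h1, h2]
  | right b u' v' w _ ih =>
    intro u v hu hv
    cases v with
    | nil => simp at hv
    | cons b₁ v₀ =>
      simp only [List.map_cons, List.cons.injEq] at hv
      obtain ⟨rfl, hv⟩ := hv
      obtain ⟨h1, h2⟩ := ih u v₀ hu hv
      simp [h1, h2]

lemma splitL {w : List (A₁ ⊕ A₂)} {u₁ v₁ : List A₁} {a : A₁}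
    (h : projL w = u₁ ++ a :: v₁) :
    ∃ u v, w = u ++ Sum.inl a :: v ∧ projL u = u₁ ∧ projL v = v₁ := by
  induction w generalizing u₁ with
  | nil => cases u₁ <;> simp at h
  | cons s t ih =>
    cases s with
    | inl c =>
      rw [projL_cons_inl] at h
      cases u₁ with
      | nil =>
        simp only [List.nil_append, List.cons.injEq] at h
        obtain ⟨rfl, rfl⟩ := h
        exact ⟨[], t, rfl, rfl, rfl⟩
      | cons c' u₁' =>
        simp only [List.cons_append, List.cons.injEq] at h
        obtain ⟨rfl, h⟩ := h
        obtain ⟨u, v, rfl, h1, h2⟩ := ih h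
        exact ⟨Sum.inl c :: u, v, rfl, by simp [h1], h2⟩
    | inr b =>
      rw [projL_cons_inr] at h
      obtain ⟨u, v, rfl, h1, h2⟩ := ih h
      exact ⟨Sum.inr b :: u, v, rfl, by simp [h1], h2⟩

lemma splitR {w : List (A₁ ⊕ A₂)} {u₂ v₂ : List A₂} {b : A₂}
    (h : projR w = u₂ ++ b :: v₂) :
    ∃ u v, w = u ++ Sum.inr b :: v ∧ projR u = u₂ ∧ projR v = v₂ := by
  induction w generalizing u₂ with
  | nil => cases u₂ <;> simp at h
  | cons s t ih =>
    cases s with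
    | inr c =>
      rw [projR_cons_inr] at h
      cases u₂ with
      | nil =>
        simp only [List.nil_append, List.cons.injEq] at h
        obtain ⟨rfl, rfl⟩ := h
        exact ⟨[], t, rfl, rfl, rfl⟩
      | cons c' u₂' =>
        simp only [List.cons_append, List.cons.injEq] at h
        obtain ⟨rfl, h⟩ := h
        obtain ⟨u, v, rfl, h1, h2⟩ := ih h
        exact ⟨Sum.inr c :: u, v, rfl, by simp [h1], h2⟩
    | inl a =>
      rw [projR_cons_inl] at h
      obtain ⟨u, v, rfl, h1, h2⟩ := ih h
      exact ⟨Sum.inl a :: u, v, rfl, by simp [h1], h2⟩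

variable {Q₁ Q₂ : Type}

/-- The shuffle machine: simulate `M₁` on the left letters (right letters
translucent everywhere); when `M₁` would accept, restart into simulating
`M₂` on the right letters (left letters translucent everywhere). -/
def shuffleM (M₁ : NrNFAwtl Q₁ A₁) (M₂ : NrNFAwtl Q₂ A₂) (q₂₀ : Q₂) (q₁₀ : Q₁) :
    NrNFAwtl (Q₁ ⊕ Q₂) (A₁ ⊕ A₂) where
  τ q := match q with
    | .inl q₁ => {s | match s with | .inl a => a ∈ M₁.τ q₁ | .inr _ => True}
    | .inr q₂ => {s | match s with | .inl _ => True | .inr b => b ∈ M₂.τ q₂}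
  I := {.inl q₁₀}
  δ q s := match q, s with
    | .inl q₁, .inl a => Sum.inl '' M₁.δ q₁ a
    | .inr q₂, .inr b => Sum.inr '' M₂.δ q₂ b
    | _, _ => ∅
  δend q := match q with
    | .inl q₁ =>
      match M₁.δend q₁ with
      | .cont S => .cont (Sum.inl '' S)
      | .accept => .cont {Sum.inr q₂₀}
    | .inr q₂ =>
      match M₂.δend q₂ with
      | .cont S => .cont (Sum.inr '' S)
      | .accept => .accept
  tr_compat := by
    rintro (q₁ | q₂) (a | b) h
    · have ha : a ∈ M₁.τ q₁ := h
      simp only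
      rw [M₁.tr_compat q₁ a ha, Set.image_empty]
    · rfl
    · rfl
    · have hb : b ∈ M₂.τ q₂ := h
      simp only
      rw [M₂.tr_compat q₂ b hb, Set.image_empty]

variable {M₁ : NrNFAwtl Q₁ A₁} {M₂ : NrNFAwtl Q₂ A₂} {q₂₀ : Q₂} {q₁₀ : Q₁}

lemma shuffleM_tau_ll {q : Q₁} {a : A₁} :
    Sum.inl a ∈ (shuffleM M₁ M₂ q₂₀ q₁₀).τ (.inl q) ↔ a ∈ M₁.τ q := Iff.rfl

lemma shuffleM_tau_lr {q : Q₁} {b : A₂} :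
    Sum.inr b ∈ (shuffleM M₁ M₂ q₂₀ q₁₀).τ (.inl q) := trivial

lemma shuffleM_tau_rl {q : Q₂} {a : A₁} :
    Sum.inl a ∈ (shuffleM M₁ M₂ q₂₀ q₁₀).τ (.inr q) := trivial

lemma shuffleM_tau_rr {q : Q₂} {b : A₂} :
    Sum.inr b ∈ (shuffleM M₁ M₂ q₂₀ q₁₀).τ (.inr q) ↔ b ∈ M₂.τ q := Iff.rfl

lemma shuffleM_delta_ll (q : Q₁) (a : A₁) :
    (shuffleM M₁ M₂ q₂₀ q₁₀).δ (.inl q) (.inl a) = Sum.inl '' M₁.δ q a := rfl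

lemma shuffleM_delta_rr (q : Q₂) (b : A₂) :
    (shuffleM M₁ M₂ q₂₀ q₁₀).δ (.inr q) (.inr b) = Sum.inr '' M₂.δ q b := rfl

lemma shuffleM_dend_l_cont {q : Q₁} {S : Set Q₁} (h : M₁.δend q = .cont S) :
    (shuffleM M₁ M₂ q₂₀ q₁₀).δend (.inl q) = .cont (Sum.inl '' S) := by
  simp [shuffleM, h]

lemma shuffleM_dend_l_acc {q : Q₁} (h : M₁.δend q = .accept) :
    (shuffleM M₁ M₂ q₂₀ q₁₀).δend (.inl q) = .cont {Sum.inr q₂₀} := by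
  simp [shuffleM, h]

lemma shuffleM_dend_r_cont {q : Q₂} {S : Set Q₂} (h : M₂.δend q = .cont S) :
    (shuffleM M₁ M₂ q₂₀ q₁₀).δend (.inr q) = .cont (Sum.inr '' S) := by
  simp [shuffleM, h]

lemma shuffleM_dend_r_acc {q : Q₂} (h : M₂.δend q = .accept) :
    (shuffleM M₁ M₂ q₂₀ q₁₀).δend (.inr q) = .accept := by
  simp [shuffleM, h]

lemma trans_l_iff {q : Q₁} {w : List (A₁ ⊕ A₂)} :
    (∀ s ∈ w, s ∈ (shuffleM M₁ M₂ q₂₀ q₁₀).τ (.inl q)) ↔ ∀ a ∈ projL w, a ∈ M₁.τ q := by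
  constructor
  · intro h a ha
    exact h _ (mem_projL.mp ha)
  · rintro h (a | b) hs
    · exact h a (mem_projL.mpr hs)
    · exact shuffleM_tau_lr
  
lemma trans_r_iff {q : Q₂} {w : List (A₁ ⊕ A₂)} :
    (∀ s ∈ w, s ∈ (shuffleM M₁ M₂ q₂₀ q₁₀).τ (.inr q)) ↔ ∀ b ∈ projR w, b ∈ M₂.τ q := by
  constructor
  · intro h b hb
    exact h _ (mem_projR.mp hb)
  · rintro h (a | b) hs
    · exact shuffleM_tau_rl
    · exact h b (mem_projR.mpr hs)

lemma sound2 {c : NrConf (Q₁ ⊕ Q₂) (A₁ ⊕ A₂)}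
    (h : Relation.ReflTransGen ((shuffleM M₁ M₂ q₂₀ q₁₀).Step) c .accept) :
    ∀ (x : List (A₁ ⊕ A₂)) (q : Q₂) (w : List (A₁ ⊕ A₂)), c = .conf x (.inr q) w →
      Relation.ReflTransGen M₂.Step (.conf (projR x) q (projR w)) .accept := by
  induction h using Relation.ReflTransGen.head_induction_on with
  | refl => intro x q w h; exact absurd h (by simp)
  | head hstep htail ih =>
    intro x q w hc
    subst hc
    cases hstep with
    | read x q' q'' u v s hu hs hq =>
      cases s with
      | inl a₁ => exact absurd shuffleM_tau_rl hs
      | inr b =>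
        rw [shuffleM_delta_rr] at hq
        obtain ⟨p, hp, rfl⟩ := hq
        simp only [projR_append, projR_cons_inr]
        refine Relation.ReflTransGen.head
          (NrNFAwtl.Step.read (projR x) q p (projR u) (projR v) b
            (trans_r_iff.mp hu) (fun hb => hs (shuffleM_tau_rr.mpr hb)) hp) ?_
        simpa using ih (x ++ u) p v rfl
    | restart x w q' p S hw hS hp =>
      rcases hE : M₂.δend q with S₂ | _
      · rw [shuffleM_dend_r_cont hE] at hS
        injection hS with hS
        subst hS
        obtain ⟨p₂, hp₂, rfl⟩ := hp
        refine Relation.ReflTransGen.head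
          (NrNFAwtl.Step.restart (projR x) (projR w) q p₂ S₂ (trans_r_iff.mp hw) hE hp₂) ?_
        simpa using ih [] p₂ (x ++ w) rfl
      · rw [shuffleM_dend_r_acc hE] at hS
        cases hS
    | accept x w q' hw hS =>
      rcases hE : M₂.δend q with S₂ | _
      · rw [shuffleM_dend_r_cont hE] at hS
        cases hS
      · exact Relation.ReflTransGen.single
          (NrNFAwtl.Step.accept (projR x) (projR w) q (trans_r_iff.mp hw) hE)

lemma sound1 {c : NrConf (Q₁ ⊕ Q₂) (A₁ ⊕ A₂)}
    (h : Relation.ReflTransGen ((shuffleM M₁ M₂ q₂₀ q₁₀).Step) c .accept) :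
    ∀ (x : List (A₁ ⊕ A₂)) (q : Q₁) (w : List (A₁ ⊕ A₂)), c = .conf x (.inl q) w →
      Relation.ReflTransGen M₁.Step (.conf (projL x) q (projL w)) .accept ∧
      Relation.ReflTransGen M₂.Step (.conf [] q₂₀ (projR (x ++ w))) .accept := by
  induction h using Relation.ReflTransGen.head_induction_on with
  | refl => intro x q w h; exact absurd h (by simp)
  | head hstep htail ih =>
    intro x q w hc
    subst hc
    cases hstep with
    | read x q' q'' u v s hu hs hq =>
      cases s with
      | inr b => exact absurd shuffleM_tau_lr hs
      | inl a =>
        rw [shuffleM_delta_ll] at hq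
        obtain ⟨p, hp, rfl⟩ := hq
        obtain ⟨r1, r2⟩ := ih (x ++ u) p v rfl
        constructor
        · simp only [projL_append, projL_cons_inl]
          refine Relation.ReflTransGen.head
            (NrNFAwtl.Step.read (projL x) q p (projL u) (projL v) a
              (trans_l_iff.mp hu) (fun ha => hs (shuffleM_tau_ll.mpr ha)) hp) ?_
          simpa using r1
        · simpa using r2
    | restart x w q' p S hw hS hp =>
      rcases hE : M₁.δend q with S₁ | _
      · rw [shuffleM_dend_l_cont hE] at hS
        injection hS with hS
        subst hS
        obtain ⟨p₁, hp₁, rfl⟩ := hp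
        obtain ⟨r1, r2⟩ := ih [] p₁ (x ++ w) rfl
        constructor
        · refine Relation.ReflTransGen.head
            (NrNFAwtl.Step.restart (projL x) (projL w) q p₁ S₁ (trans_l_iff.mp hw) hE hp₁) ?_
          simpa using r1
        · simpa using r2
      · rw [shuffleM_dend_l_acc hE] at hS
        injection hS with hS
        subst hS
        rw [Set.mem_singleton_iff] at hp
        subst hp
        constructor
        · exact Relation.ReflTransGen.single
            (NrNFAwtl.Step.accept (projL x) (projL w) q (trans_l_iff.mp hw) hE)
        · simpa using sound2 htail [] q₂₀ (x ++ w) rfl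
    | accept x w q' hw hS =>
      rcases hE : M₁.δend q with S₁ | _
      · rw [shuffleM_dend_l_cont hE] at hS; cases hS
      · rw [shuffleM_dend_l_acc hE] at hS; cases hS

lemma complete2 {c₂ : NrConf Q₂ A₂}
    (h : Relation.ReflTransGen M₂.Step c₂ .accept) :
    ∀ (x : List (A₁ ⊕ A₂)) (q : Q₂) (w : List (A₁ ⊕ A₂)),
      c₂ = .conf (projR x) q (projR w) →
      Relation.ReflTransGen ((shuffleM M₁ M₂ q₂₀ q₁₀).Step) (.conf x (.inr q) w) .accept := by
  induction h using Relation.ReflTransGen.head_induction_on with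
  | refl => intro x q w h; exact absurd h (by simp)
  | head hstep htail ih =>
    intro x q w hc
    cases hstep with
    | read x₂ q₂ p u₂ v₂ b hu hb hp =>
      injection hc with h1 h2 h3
      subst h1; subst h2
      obtain ⟨u, v, rfl, hu', hv'⟩ := splitR h3.symm
      subst hu'; subst hv'
      refine Relation.ReflTransGen.head
        (NrNFAwtl.Step.read x (Sum.inr q₂) (Sum.inr p) u v (Sum.inr b)
          (trans_r_iff.mpr hu) (fun hh => hb (shuffleM_tau_rr.mp hh))
          (by rw [shuffleM_delta_rr]; exact ⟨p, hp, rfl⟩)) ?_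
      exact ih (x ++ u) p v (by simp)
    | restart x₂ w₂ q₂ p S hw hS hp =>
      injection hc with h1 h2 h3
      subst h1; subst h2; subst h3
      refine Relation.ReflTransGen.head
        (NrNFAwtl.Step.restart x w (Sum.inr q₂) (Sum.inr p) (Sum.inr '' S)
          (trans_r_iff.mpr hw) (shuffleM_dend_r_cont hS) ⟨p, hp, rfl⟩) ?_
      exact ih [] p (x ++ w) (by simp)
    | accept x₂ w₂ q₂ hw hS =>
      injection hc with h1 h2 h3
      subst h1; subst h2; subst h3
      exact Relation.ReflTransGen.single
        (NrNFAwtl.Step.accept x w (Sum.inr q₂) (trans_r_iff.mpr hw) (shuffleM_dend_r_acc hS))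

lemma complete1 {c₁ : NrConf Q₁ A₁}
    (h : Relation.ReflTransGen M₁.Step c₁ .accept) :
    ∀ (x : List (A₁ ⊕ A₂)) (q : Q₁) (w : List (A₁ ⊕ A₂)),
      c₁ = .conf (projL x) q (projL w) →
      Relation.ReflTransGen M₂.Step (.conf [] q₂₀ (projR (x ++ w))) .accept →
      Relation.ReflTransGen ((shuffleM M₁ M₂ q₂₀ q₁₀).Step) (.conf x (.inl q) w) .accept := by
  induction h using Relation.ReflTransGen.head_induction_on with
  | refl => intro x q w h; exact absurd h (by simp)
  | head hstep htail ih =>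
    intro x q w hc h2
    cases hstep with
    | read x₁ q₁ p u₁ v₁ a hu ha hp =>
      injection hc with h1 hq hw
      subst h1; subst hq
      obtain ⟨u, v, rfl, hu', hv'⟩ := splitL hw.symm
      subst hu'; subst hv'
      refine Relation.ReflTransGen.head
        (NrNFAwtl.Step.read x (Sum.inl q₁) (Sum.inl p) u v (Sum.inl a)
          (trans_l_iff.mpr hu) (fun hh => ha (shuffleM_tau_ll.mp hh))
          (by rw [shuffleM_delta_ll]; exact ⟨p, hp, rfl⟩)) ?_
      exact ih (x ++ u) p v (by simp) (by simpa using h2)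
    | restart x₁ w₁ q₁ p S hw hS hp =>
      injection hc with h1 hq hw'
      subst h1; subst hq; subst hw'
      refine Relation.ReflTransGen.head
        (NrNFAwtl.Step.restart x w (Sum.inl q₁) (Sum.inl p) (Sum.inl '' S)
          (trans_l_iff.mpr hw) (shuffleM_dend_l_cont hS) ⟨p, hp, rfl⟩) ?_
      exact ih [] p (x ++ w) (by simp) (by simpa using h2)
    | accept x₁ w₁ q₁ hw hS =>
      injection hc with h1 hq hw'
      subst h1; subst hq; subst hw'
      refine Relation.ReflTransGen.head
        (NrNFAwtl.Step.restart x w (Sum.inl q₁) (Sum.inr q₂₀) {Sum.inr q₂₀}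
          (trans_l_iff.mpr hw) (shuffleM_dend_l_acc hS) rfl) ?_
      exact complete2 h2 [] q₂₀ (x ++ w) (by simp)

end ShuffleAux


/-- The class of languages accepted by nrDFAwtls is closed
under disjoint shuffle: if `L₁ ⊆ Σ₁*` and `L₂ ⊆ Σ₂*` are accepted by
nrDFAwtls and the alphabets `Σ₁`, `Σ₂` are disjoint (here: the two summands of
`Σ₁ ⊕ Σ₂`), then `sh(L₁, L₂)` is accepted by an nrDFAwtl. -/
theorem nrDFAwtl_closed_under_disjoint_shuffle
    {A₁ A₂ : Type} [Fintype A₁] [Fintype A₂]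
    (L₁ : Set (List A₁)) (L₂ : Set (List A₂))
    (h₁ : AcceptedByNrDFAwtl L₁) (h₂ : AcceptedByNrDFAwtl L₂) :
    AcceptedByNrDFAwtl { z : List (A₁ ⊕ A₂) | ∃ u ∈ L₁, ∃ v ∈ L₂,
      IsShuffle (u.map Sum.inl) (v.map Sum.inr) z } := by
  obtain ⟨Q₁, f₁, M₁, ⟨⟨q₁₀, hI₁⟩, hδ₁, hend₁⟩, hL₁⟩ := h₁
  obtain ⟨Q₂, f₂, M₂, ⟨⟨q₂₀, hI₂⟩, hδ₂, hend₂⟩, hL₂⟩ := h₂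
  letI : Fintype Q₁ := f₁
  letI : Fintype Q₂ := f₂
  refine ⟨Q₁ ⊕ Q₂, inferInstance, shuffleM M₁ M₂ q₂₀ q₁₀, ⟨⟨.inl q₁₀, rfl⟩, ?_, ?_⟩, ?_⟩
  · rintro (q | q) (a | b)
    · rw [shuffleM_delta_ll]
      exact (hδ₁ q a).image _
    · exact Set.subsingleton_empty
    · exact Set.subsingleton_empty
    · rw [shuffleM_delta_rr]
      exact (hδ₂ q b).image _
  · rintro (q | q) S hS
    · rcases hE : M₁.δend q with S₁ | _
      · rw [shuffleM_dend_l_cont hE] at hS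
        injection hS with hS
        subst hS
        exact (hend₁ q S₁ hE).image _
      · rw [shuffleM_dend_l_acc hE] at hS
        injection hS with hS
        subst hS
        exact Set.subsingleton_singleton
    · rcases hE : M₂.δend q with S₂ | _
      · rw [shuffleM_dend_r_cont hE] at hS
        injection hS with hS
        subst hS
        exact (hend₂ q S₂ hE).image _
      · rw [shuffleM_dend_r_acc hE] at hS
        cases hS
  · ext z
    simp only [NrNFAwtl.lang, Set.mem_setOf_eq]
    constructor
    · rintro ⟨q₀, hq₀, hrun⟩
      rw [show (shuffleM M₁ M₂ q₂₀ q₁₀).I = {Sum.inl q₁₀} from rfl,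
        Set.mem_singleton_iff] at hq₀
      subst hq₀
      obtain ⟨r1, r2⟩ := sound1 hrun [] q₁₀ z rfl
      refine ⟨projL z, ?_, projR z, ?_, isShuffle_proj z⟩
      · rw [← hL₁]
        exact ⟨q₁₀, by rw [hI₁]; rfl, r1⟩
      · rw [← hL₂]
        exact ⟨q₂₀, by rw [hI₂]; rfl, by simpa using r2⟩
    · rintro ⟨u, hu, v, hv, hsh⟩
      obtain ⟨hzL, hzR⟩ := proj_of_isShuffle hsh u v rfl rfl
      rw [← hL₁] at hu
      obtain ⟨p₀, hp₀, run₁⟩ := hu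
      rw [hI₁, Set.mem_singleton_iff] at hp₀
      subst hp₀
      rw [← hL₂] at hv
      obtain ⟨p₂, hp₂, run₂⟩ := hv
      rw [hI₂, Set.mem_singleton_iff] at hp₂
      subst hp₂
      refine ⟨.inl p₀, rfl, complete1 run₁ [] p₀ z (by simp [hzL]) ?_⟩
      simp only [List.nil_append, hzR]
      exact run₂
end
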